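/- arXiv:1801.04767 — 4 statements merged into one kernel-verified Lean document; each statement's English description precedes it below -/
import Mathlib

section
/- Let V be a real inner product space of finite dimension 2n+1 with n ≥ 1. Let ξ ∈ V be a unit vector, let η be the linear functional η(Y) = ⟨Y, ξ⟩, and let φ be a skew-adjoint endomorphism of V satisfying φ(φ(Y)) = -Y + η(Y)ξ for all Y ∈ V and φ(ξ) = 0. If Q is a self-adjoint endomorphism of V satisfying Q(ξ) = 2n·ξ and Q∘φ + φ∘Q = 4n·φ, then the trace of Q equals 2n(2n+1). (This is the pointwise computation of the scalar curvature r = 2n(2n+1) carried out in the proof of Theorem 3.2 using an orthonormal φ-basis.) -/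
/-!
Multiplying `Qφ + φQ = 4n φ` on the right by `φ` and taking traces gives
`2 tr(Qφ²) = 4n tr(φ²)`, since `tr(φQφ) = tr(Qφ²)`. As `φ² = ξ ⊗ ξ - 1`, we have
`tr(φ²) = 1 - (2n+1) = -2n` and `tr(Qφ²) = ⟪ξ, Qξ⟫ - tr Q = 2n - tr Q`,
hence `tr Q = 2n(2n+1)`.
-/

open RealInnerProductSpace InnerProductSpace

namespace LinearMap

variable {R M : Type*} [CommRing R] [AddCommGroup M] [Module R M]

theorem two_mul_trace_mul_mul_self_of_mul_add_mul_eq_smul {Q J : M →ₗ[R] M} {c : R}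
    (h : Q * J + J * Q = c • J) : 2 * trace R M (Q * (J * J)) = c * trace R M (J * J) := by
  calc 2 * trace R M (Q * (J * J)) = trace R M ((Q * J + J * Q) * J) := by
        rw [add_mul, map_add, mul_assoc J, trace_mul_comm R J, ← mul_assoc, two_mul]
    _ = c * trace R M (J * J) := by rw [h, smul_mul_assoc, map_smul, smul_eq_mul]

end LinearMap

section AlmostContact

variable {V : Type*} [NormedAddCommGroup V] [InnerProductSpace ℝ V]
  {ξ : V} {φ : V →ₗ[ℝ] V}

theorem mul_self_eq_rankOne_sub_one (hφ2 : ∀ Y : V, φ (φ Y) = -Y + ⟪Y, ξ⟫ • ξ) :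
    φ * φ = (rankOne ℝ ξ ξ : V →ₗ[ℝ] V) - 1 := by
  ext Y
  simp only [Module.End.mul_apply, hφ2, real_inner_comm, LinearMap.sub_apply,
    ContinuousLinearMap.coe_coe, rankOne_apply, Module.End.one_apply]
  abel

theorem trace_mul_rankOne_self [FiniteDimensional ℝ V] (Q : V →ₗ[ℝ] V) (ξ : V) :
    LinearMap.trace ℝ V (Q * rankOne ℝ ξ ξ) = ⟪ξ, Q ξ⟫ := by
  have hcomp : Q * (rankOne ℝ ξ ξ : V →ₗ[ℝ] V) = rankOne ℝ (Q ξ) ξ := by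
    ext Y
    simp
  rw [hcomp, trace_rankOne]

theorem trace_mul_self_eq_one_sub_finrank [FiniteDimensional ℝ V] (hξ : ‖ξ‖ = 1)
    (hφ2 : ∀ Y : V, φ (φ Y) = -Y + ⟪Y, ξ⟫ • ξ) :
    LinearMap.trace ℝ V (φ * φ) = 1 - Module.finrank ℝ V := by
  rw [mul_self_eq_rankOne_sub_one hφ2, map_sub, trace_rankOne, LinearMap.trace_one,
    real_inner_self_eq_norm_sq, hξ, one_pow]

theorem trace_mul_mul_self_eq_inner_sub_trace [FiniteDimensional ℝ V] (Q : V →ₗ[ℝ] V)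
    (hφ2 : ∀ Y : V, φ (φ Y) = -Y + ⟪Y, ξ⟫ • ξ) :
    LinearMap.trace ℝ V (Q * (φ * φ)) = ⟪ξ, Q ξ⟫ - LinearMap.trace ℝ V Q := by
  rw [mul_self_eq_rankOne_sub_one hφ2, mul_sub, mul_one, map_sub, trace_mul_rankOne_self]

end AlmostContact

theorem k_contact_trace_eq_general {V : Type*} [NormedAddCommGroup V] [InnerProductSpace ℝ V]
    [FiniteDimensional ℝ V] (n : ℕ)
    (hdim : Module.finrank ℝ V = 2 * n + 1)
    (ξ : V) (hξ : ‖ξ‖ = 1)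
    (φ Q : V →ₗ[ℝ] V)
    (hφ2 : ∀ Y : V, φ (φ Y) = -Y + ⟪Y, ξ⟫ • ξ)
    (hQξ : Q ξ = ((2 * n : ℕ) : ℝ) • ξ)
    (hQφ : ∀ Y : V, Q (φ Y) + φ (Q Y) = ((4 * n : ℕ) : ℝ) • φ Y) :
    LinearMap.trace ℝ V Q = 2 * n * (2 * n + 1) := by
  have hanti : Q * φ + φ * Q = ((4 * n : ℕ) : ℝ) • φ := LinearMap.ext hQφ
  have key := LinearMap.two_mul_trace_mul_mul_self_of_mul_add_mul_eq_smul hanti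
  have hξQξ : ⟪ξ, Q ξ⟫ = 2 * n := by
    rw [hQξ, real_inner_smul_right, real_inner_self_eq_norm_sq, hξ]
    push_cast
    ring
  rw [trace_mul_mul_self_eq_inner_sub_trace Q hφ2, trace_mul_self_eq_one_sub_finrank hξ hφ2,
    hξQξ, hdim] at key
  push_cast at key
  linarith

/-- The pointwise scalar-curvature computation in the proof of Theorem 3.2:
on a `(2n+1)`-dimensional inner product space with an almost-contact structure
`(φ, ξ, η)`, a self-adjoint operator `Q` with `Qξ = 2n ξ` and
`Qφ + φQ = 4n φ` has trace `2n(2n+1)`. -/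
theorem k_contact_trace_eq {V : Type*} [NormedAddCommGroup V] [InnerProductSpace ℝ V]
    [FiniteDimensional ℝ V] (n : ℕ) (hn : 1 ≤ n)
    (hdim : Module.finrank ℝ V = 2 * n + 1)
    (ξ : V) (hξ : ‖ξ‖ = 1)
    (φ Q : V →ₗ[ℝ] V)
    (hφskew : ∀ Y Z : V, ⟪φ Y, Z⟫ = -⟪Y, φ Z⟫)
    (hφ2 : ∀ Y : V, φ (φ Y) = -Y + ⟪Y, ξ⟫ • ξ)
    (hφξ : φ ξ = 0)
    (hQsym : ∀ Y Z : V, ⟪Q Y, Z⟫ = ⟪Y, Q Z⟫)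
    (hQξ : Q ξ = ((2 * n : ℕ) : ℝ) • ξ)
    (hQφ : ∀ Y : V, Q (φ Y) + φ (Q Y) = ((4 * n : ℕ) : ℝ) • φ Y) :
    LinearMap.trace ℝ V Q = 2 * n * (2 * n + 1) :=
  k_contact_trace_eq_general n hdim ξ hξ φ Q hφ2 hQξ hQφ
end

section
/- Let W be a real inner product space of finite dimension 2n with n ≥ 1, let J be a skew-adjoint endomorphism of W with J∘J = -id (an orthogonal complex structure), and let Q be a self-adjoint endomorphism of W satisfying Q∘J + J∘Q = c·J for some real constant c. Then the trace of Q equals n·c. (This is the core φ-basis trace identity used in the proof of Theorem 3.2: eigenvectors e with Qe = σe give Q(Je) = (c − σ)Je, so eigenvalues pair up to sum c.) -/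
open RealInnerProductSpace

/-! Composing `QJ + JQ = cJ` with `J` on the left gives `JQJ - Q = -c`, and `JQJ` has the trace
of `QJ² = -Q` by cyclicity, so `-2 tr Q = -c · dim W`. -/

namespace LinearMap

variable {R M : Type*} [CommRing R] [AddCommGroup M] [Module R M] [Module.Free R M]
  [Module.Finite R M]

theorem trace_comp_comp_eq_neg_of_comp_self_eq_neg_id {J : M →ₗ[R] M} (hJ : J ∘ₗ J = -id)
    (Q : M →ₗ[R] M) : trace R M (J ∘ₗ Q ∘ₗ J) = -trace R M Q := by
  rw [trace_comp_comm', comp_assoc, hJ, comp_neg, comp_id, map_neg]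

theorem two_mul_trace_eq_of_anticomm_eq_smul {J Q : M →ₗ[R] M} {c : R} (hJ : J ∘ₗ J = -id)
    (hQJ : Q ∘ₗ J + J ∘ₗ Q = c • J) : 2 * trace R M Q = c * Module.finrank R M := by
  have hconj : J ∘ₗ Q ∘ₗ J - Q = -(c • id) := by
    have h := congrArg (J ∘ₗ ·) hQJ
    simp only [comp_add, comp_smul, ← comp_assoc, hJ, neg_comp, id_comp, smul_neg] at h
    rw [← h, comp_assoc]
    abel
  have htr := congrArg (trace R M) hconj
  rw [map_sub, trace_comp_comp_eq_neg_of_comp_self_eq_neg_id hJ, map_neg, map_smul,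
    trace_id, smul_eq_mul] at htr
  linear_combination -htr

end LinearMap

theorem anticommutator_trace_eq_general {W : Type*} [NormedAddCommGroup W] [InnerProductSpace ℝ W]
    [FiniteDimensional ℝ W] (n : ℕ)
    (hdim : Module.finrank ℝ W = 2 * n)
    (J Q : W →ₗ[ℝ] W) (c : ℝ)
    (hJ2 : ∀ Y : W, J (J Y) = -Y)
    (hQJ : ∀ Y : W, Q (J Y) + J (Q Y) = c • J Y) :
    LinearMap.trace ℝ W Q = n * c := by
  have htwice := LinearMap.two_mul_trace_eq_of_anticomm_eq_smul
    (LinearMap.ext hJ2 : J ∘ₗ J = -LinearMap.id) (LinearMap.ext hQJ : Q ∘ₗ J + J ∘ₗ Q = c • J)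
  rw [hdim] at htwice
  push_cast at htwice
  linarith

/-- The φ-basis trace identity used in the proof of Theorem 3.2: on a `2n`-dimensional
inner product space with orthogonal complex structure `J`, a self-adjoint operator `Q`
satisfying `QJ + JQ = c J` has trace `n c`. -/
theorem anticommutator_trace_eq {W : Type*} [NormedAddCommGroup W] [InnerProductSpace ℝ W]
    [FiniteDimensional ℝ W] (n : ℕ) (hn : 1 ≤ n)
    (hdim : Module.finrank ℝ W = 2 * n)
    (J Q : W →ₗ[ℝ] W) (c : ℝ)
    (hJskew : ∀ Y Z : W, ⟪J Y, Z⟫ = -⟪Y, J Z⟫)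
    (hJ2 : ∀ Y : W, J (J Y) = -Y)
    (hQsym : ∀ Y Z : W, ⟪Q Y, Z⟫ = ⟪Y, Q Z⟫)
    (hQJ : ∀ Y : W, Q (J Y) + J (Q Y) = c • J Y) :
    LinearMap.trace ℝ W Q = n * c :=
  anticommutator_trace_eq_general n hdim J Q c hJ2 hQJ
end

section
/- Let V be a real inner product space of finite dimension 2n+1 with n ≥ 1. Let ξ ∈ V be a unit vector, let η be the linear functional η(Y) = ⟨Y, ξ⟩, and let φ be a skew-adjoint endomorphism of V satisfying φ(φ(Y)) = -Y + η(Y)ξ for all Y ∈ V and φ(ξ) = 0. Let h and Q be endomorphisms of V with h(ξ) = 0, h∘φ = -φ∘h, and Q∘φ = φ∘Q. If there exist real numbers c ≠ 0 and λ such that Q(Z) + c·h(φ(Z)) = λ·Z for all Z ∈ V, then Q = λ·id and h = 0. (This is the pointwise linear-algebra argument in the proof of Theorem 4.3: substituting φZ into the soliton identity (5.5) gives Qφ − c·h = λφ, applying φ gives φQ + c·h = λφ, and adding these with Qφ = φQ forces Q = λ·id and h = 0.) -/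
open RealInnerProductSpace

/-!
Substituting `φ Z` into the soliton identity gives `Qφ - c h = λ φ`, while applying `φ` to it
gives `φQ + c (h - η(h) ξ) = λ φ`. Since `Qφ = φQ`, subtracting leaves `2 h Z = η(h Z) ξ`.
Applying `φ` shows `h Z ∈ ker φ = ℝ ξ`, so `h Z = η(h Z) ξ = 2 h Z`, i.e. `h Z = 0`; the soliton
identity then reduces to `Q = λ · id`.
-/

section AlmostContact

variable {V : Type*} [NormedAddCommGroup V] [InnerProductSpace ℝ V] {ξ : V} {φ : V →ₗ[ℝ] V}

theorem eq_inner_smul_of_map_eq_zero (hφ2 : ∀ Y : V, φ (φ Y) = -Y + ⟪Y, ξ⟫ • ξ) {v : V}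
    (hv : φ v = 0) : v = ⟪v, ξ⟫ • ξ := by
  have := hφ2 v
  rw [hv, map_zero] at this
  linear_combination (norm := module) this

theorem eq_zero_of_two_smul_eq_inner_smul (hφ2 : ∀ Y : V, φ (φ Y) = -Y + ⟪Y, ξ⟫ • ξ)
    (hφξ : φ ξ = 0) {v : V} (hv : (2 : ℝ) • v = ⟪v, ξ⟫ • ξ) : v = 0 := by
  have hφv : φ v = 0 := by
    have := congrArg φ hv
    rw [map_smul, map_smul, hφξ, smul_zero] at this
    exact (smul_eq_zero.mp this).resolve_left two_ne_zero
  have := eq_inner_smul_of_map_eq_zero hφ2 hφv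
  linear_combination (norm := module) hv - this

variable {h Q : V →ₗ[ℝ] V} {c lam : ℝ}

theorem soliton_comp_phi (hφ2 : ∀ Y : V, φ (φ Y) = -Y + ⟪Y, ξ⟫ • ξ) (hhξ : h ξ = 0)
    (hsoliton : ∀ Z : V, Q Z + c • h (φ Z) = lam • Z) (Z : V) :
    Q (φ Z) - c • h Z = lam • φ Z := by
  have := hsoliton (φ Z)
  rw [hφ2, map_add, map_neg, map_smul, hhξ, smul_zero, add_zero] at this
  linear_combination (norm := module) this

theorem phi_comp_soliton (hφ2 : ∀ Y : V, φ (φ Y) = -Y + ⟪Y, ξ⟫ • ξ)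
    (hhφ : ∀ Y : V, h (φ Y) = -φ (h Y))
    (hsoliton : ∀ Z : V, Q Z + c • h (φ Z) = lam • Z) (Z : V) :
    φ (Q Z) + c • (h Z - ⟪h Z, ξ⟫ • ξ) = lam • φ Z := by
  have := congrArg φ (hsoliton Z)
  rw [map_add, map_smul, map_smul, hhφ, map_neg, hφ2] at this
  linear_combination (norm := module) this

theorem eq_zero_of_soliton (hφ2 : ∀ Y : V, φ (φ Y) = -Y + ⟪Y, ξ⟫ • ξ) (hφξ : φ ξ = 0)
    (hhξ : h ξ = 0) (hhφ : ∀ Y : V, h (φ Y) = -φ (h Y)) (hQφ : ∀ Y : V, Q (φ Y) = φ (Q Y))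
    (hc : c ≠ 0) (hsoliton : ∀ Z : V, Q Z + c • h (φ Z) = lam • Z) : h = 0 := by
  ext Z
  have hdiff : c • ((2 : ℝ) • h Z - ⟪h Z, ξ⟫ • ξ) = 0 := by
    have := (soliton_comp_phi hφ2 hhξ hsoliton Z).trans
      (phi_comp_soliton hφ2 hhφ hsoliton Z).symm
    rw [hQφ] at this
    linear_combination (norm := module) -this
  have htwo := (smul_eq_zero.mp hdiff).resolve_left hc
  exact eq_zero_of_two_smul_eq_inner_smul hφ2 hφξ (sub_eq_zero.mp htwo)

end AlmostContact

theorem soliton_collinear_pointwise_general {V : Type*} [NormedAddCommGroup V] [InnerProductSpace ℝ V]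
    (ξ : V)
    (φ h Q : V →ₗ[ℝ] V)
    (hφ2 : ∀ Y : V, φ (φ Y) = -Y + ⟪Y, ξ⟫ • ξ)
    (hφξ : φ ξ = 0)
    (hhξ : h ξ = 0)
    (hhφ : ∀ Y : V, h (φ Y) = -φ (h Y))
    (hQφ : ∀ Y : V, Q (φ Y) = φ (Q Y))
    (c lam : ℝ) (hc : c ≠ 0)
    (hsoliton : ∀ Z : V, Q Z + c • h (φ Z) = lam • Z) :
    (∀ Z : V, Q Z = lam • Z) ∧ h = 0 := by
  have hh : h = 0 := eq_zero_of_soliton hφ2 hφξ hhξ hhφ hQφ hc hsoliton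
  refine ⟨fun Z => ?_, hh⟩
  simpa [hh] using hsoliton Z

/-- The pointwise linear-algebra argument in the proof of Theorem 4.3:
if `Q Z + c h(φ Z) = λ Z` for all `Z`, with `c ≠ 0`, `h ξ = 0`, `hφ = -φh`
and `Qφ = φQ`, then `Q = λ · id` and `h = 0`. -/
theorem soliton_collinear_pointwise {V : Type*} [NormedAddCommGroup V] [InnerProductSpace ℝ V]
    [FiniteDimensional ℝ V] (n : ℕ) (hn : 1 ≤ n)
    (hdim : Module.finrank ℝ V = 2 * n + 1)
    (ξ : V) (hξ : ‖ξ‖ = 1)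
    (φ h Q : V →ₗ[ℝ] V)
    (hφskew : ∀ Y Z : V, ⟪φ Y, Z⟫ = -⟪Y, φ Z⟫)
    (hφ2 : ∀ Y : V, φ (φ Y) = -Y + ⟪Y, ξ⟫ • ξ)
    (hφξ : φ ξ = 0)
    (hhξ : h ξ = 0)
    (hhφ : ∀ Y : V, h (φ Y) = -φ (h Y))
    (hQφ : ∀ Y : V, Q (φ Y) = φ (Q Y))
    (c lam : ℝ) (hc : c ≠ 0)
    (hsoliton : ∀ Z : V, Q Z + c • h (φ Z) = lam • Z) :
    (∀ Z : V, Q Z = lam • Z) ∧ h = 0 :=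
  soliton_collinear_pointwise_general ξ φ h Q hφ2 hφξ hhξ hhφ hQφ c lam hc hsoliton
end

section
/- Let m ≥ 3, let f, g : ℝ^m → ℝ be smooth (C^∞) functions, and let η : ℝ^m → (ℝ^m →L[ℝ] ℝ) be a smooth 1-form. Suppose that for every x ∈ ℝ^m the total derivative of f satisfies fderiv ℝ f x = g(x) • η(x) (i.e. df = g·η). Define the 2-form dη by dη(x)(u,v) = (fderiv ℝ η x u) v − (fderiv ℝ η x v) u, and suppose that for every x ∈ ℝ^m there exist vectors u, v, w ∈ ℝ^m with η(x)(u)·dη(x)(v,w) − η(x)(v)·dη(x)(u,w) + η(x)(w)·dη(x)(u,v) ≠ 0 (i.e. the 3-form η ∧ dη is nowhere vanishing). Then g ≡ 0 and f is constant. (This is the step in the proof of Theorem 3.3: from df = (ξf)η and d²f = 0, wedging with η and using the nondegeneracy of the contact form η one obtains ξf = 0, hence df = 0 and f is constant.) -/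
theorem aux_key (m : ℕ)
    (f g : EuclideanSpace ℝ (Fin m) → ℝ)
    (η : EuclideanSpace ℝ (Fin m) → (EuclideanSpace ℝ (Fin m) →L[ℝ] ℝ))
    (hf : ContDiff ℝ (⊤ : ℕ∞) f) (hg : ContDiff ℝ (⊤ : ℕ∞) g) (hη : ContDiff ℝ (⊤ : ℕ∞) η)
    (hdf : ∀ x, fderiv ℝ f x = g x • η x) (x : EuclideanSpace ℝ (Fin m))
    (u v : EuclideanSpace ℝ (Fin m)) :
    g x * ((fderiv ℝ η x u) v - (fderiv ℝ η x v) u)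
      = fderiv ℝ g x v * η x u - fderiv ℝ g x u * η x v := by
  set F : EuclideanSpace ℝ (Fin m) → (EuclideanSpace ℝ (Fin m) →L[ℝ] ℝ) :=
    fun y => g y • η y with hF
  have hFd : Differentiable ℝ F :=
    (hg.smul hη).differentiable (by simp)
  have h1 : ∀ y, HasFDerivAt f (F y) y := by
    intro y
    have := (hf.differentiable (by simp) y).hasFDerivAt
    rwa [hdf y] at this
  have h2 : HasFDerivAt F (fderiv ℝ F x) x := (hFd x).hasFDerivAt
  have hsymm := second_derivative_symmetric h1 h2 u v
  have hgs : HasFDerivAt F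
      ((fderiv ℝ g x).smulRight (η x) + g x • fderiv ℝ η x) x := by
    have := ((hg.differentiable (by simp) x).hasFDerivAt).smul
      ((hη.differentiable (by simp) x).hasFDerivAt)
    exact this.congr_fderiv (add_comm _ _)
  have hFx : fderiv ℝ F x = (fderiv ℝ g x).smulRight (η x) + g x • fderiv ℝ η x :=
    hgs.fderiv
  have hu := congrArg (fun (T : EuclideanSpace ℝ (Fin m) →L[ℝ]
      (EuclideanSpace ℝ (Fin m) →L[ℝ] ℝ)) => (T u) v) hFx
  have hv := congrArg (fun (T : EuclideanSpace ℝ (Fin m) →L[ℝ]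
      (EuclideanSpace ℝ (Fin m) →L[ℝ] ℝ)) => (T v) u) hFx
  simp only [ContinuousLinearMap.add_apply, ContinuousLinearMap.smulRight_apply,
    ContinuousLinearMap.smul_apply, smul_eq_mul] at hu hv
  have := hsymm
  rw [hu, hv] at this
  ring_nf
  ring_nf at this
  linarith

/-- The step in the proof of Theorem 3.3: if `df = g · η` for a smooth 1-form `η`
with `η ∧ dη` nowhere vanishing (the contact condition), then `g ≡ 0` and `f` is
constant. Here `dη(x)(u,v) = (fderiv ℝ η x u) v − (fderiv ℝ η x v) u`. -/
theorem contact_df_eq_g_eta (m : ℕ) (hm : 3 ≤ m)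
    (f g : EuclideanSpace ℝ (Fin m) → ℝ)
    (η : EuclideanSpace ℝ (Fin m) → (EuclideanSpace ℝ (Fin m) →L[ℝ] ℝ))
    (hf : ContDiff ℝ (⊤ : ℕ∞) f) (hg : ContDiff ℝ (⊤ : ℕ∞) g) (hη : ContDiff ℝ (⊤ : ℕ∞) η)
    (hdf : ∀ x, fderiv ℝ f x = g x • η x)
    (hcontact : ∀ x, ∃ u v w : EuclideanSpace ℝ (Fin m),
      η x u * ((fderiv ℝ η x v) w - (fderiv ℝ η x w) v)
        - η x v * ((fderiv ℝ η x u) w - (fderiv ℝ η x w) u)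
        + η x w * ((fderiv ℝ η x u) v - (fderiv ℝ η x v) u) ≠ 0) :
    (∀ x, g x = 0) ∧ ∀ x y, f x = f y := by
  have hg0 : ∀ x, g x = 0 := by
    intro x
    obtain ⟨u, v, w, hne⟩ := hcontact x
    have kvw := aux_key m f g η hf hg hη hdf x v w
    have kuw := aux_key m f g η hf hg hη hdf x u w
    have kuv := aux_key m f g η hf hg hη hdf x u v
    have hz : g x * (η x u * ((fderiv ℝ η x v) w - (fderiv ℝ η x w) v)
        - η x v * ((fderiv ℝ η x u) w - (fderiv ℝ η x w) u)
        + η x w * ((fderiv ℝ η x u) v - (fderiv ℝ η x v) u)) = 0 := by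
      have e1 : η x u * (g x * ((fderiv ℝ η x v) w - (fderiv ℝ η x w) v))
          - η x v * (g x * ((fderiv ℝ η x u) w - (fderiv ℝ η x w) u))
          + η x w * (g x * ((fderiv ℝ η x u) v - (fderiv ℝ η x v) u)) = 0 := by
        rw [kvw, kuw, kuv]; ring
      nlinarith [e1]
    exact (mul_eq_zero.mp hz).resolve_right hne
  refine ⟨hg0, ?_⟩
  apply is_const_of_fderiv_eq_zero (hf.differentiable (by simp))
  intro x
  rw [hdf x, hg0 x, zero_smul]
end
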